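/- With a G-equivariant family of inner products on 𝔤* and ℋ(m) = ‖μ(m)‖²_m, the critical set Crit₁(ℋ) of the one-form d₁ℋ equals {m ∈ M : μ*(m) ∈ 𝔤_m}, where 𝔤_m is the stabilizer subalgebra of m. In particular μ^{-1}(0) ∪ M^G ⊆ Crit₁(ℋ). -/

import Mathlib

/-!
For `ℋ(m') = ⟨μ(m'), μ(m')⟩_m` (inner product frozen at `m`, as in `d₁`), symmetry gives
`dℋ_m v = 2 ⟨μ(m), dμ_m v⟩_m = 2 dμ_m(v)(μ*(m))`, and the momentum map condition turns the last
term into `2 ω(μ*(m)^M_m, v)`. Nondegeneracy of `ω` yields `X₁^ℋ(m) = 2 μ*(m)^M_m`. The vector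
`μ*(m)^M_m` vanishes at a fixed point, where the orbit map is constant, and where `μ(m) = 0`, since
then `ω(μ*(m)^M_m, −) = ⟨μ(m), dμ_m −⟩_m = 0`.
-/

open Manifold

section

variable {E : Type*} [NormedAddCommGroup E] [NormedSpace ℝ E]
  {H : Type*} [TopologicalSpace H] {I : ModelWithCorners ℝ E H}
  {M : Type*} [TopologicalSpace M] [ChartedSpace H M]
  {W : Type*} [NormedAddCommGroup W] [NormedSpace ℝ W]
  {F : Type*} [NormedAddCommGroup F] [NormedSpace ℝ F]

theorem HasFDerivAt.mfderiv_comp_apply {g : W → F} {g' : W →L[ℝ] F} {f : M → W} {m : M}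
    (hg : HasFDerivAt g g' (f m)) (hf : MDifferentiableAt I 𝓘(ℝ, W) f m) (v : TangentSpace I m) :
    mfderiv I 𝓘(ℝ, F) (fun m' => g (f m')) m v = g' (mfderiv I 𝓘(ℝ, W) f m v : W) :=
  congrArg (· v) ((hasMFDerivAt_iff_hasFDerivAt.mpr hg).comp m hf.hasMFDerivAt).mfderiv

theorem mfderiv_apply_self_of_symm {B : W →L[ℝ] W →L[ℝ] ℝ} (hB : ∀ ξ η, B ξ η = B η ξ)
    {f : M → W} {m : M} (hf : MDifferentiableAt I 𝓘(ℝ, W) f m) (v : TangentSpace I m) :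
    mfderiv I 𝓘(ℝ, ℝ) (fun m' => B (f m') (f m')) m v
      = 2 * B (f m) (mfderiv I 𝓘(ℝ, W) f m v) := by
  have hQ : HasFDerivAt (fun ξ => B ξ ξ) ((2 : ℝ) • B (f m)) (f m) :=
    (B.hasFDerivAt_of_bilinear (hasFDerivAt_id (f m)) (hasFDerivAt_id (f m))).congr_fderiv <| by
      ext η
      simp [hB η, two_mul]
  exact hQ.mfderiv_comp_apply hf v

theorem ContinuousLinearMap.eq_of_forall_apply_eq {V : Type*} [AddCommGroup V] [Module ℝ V]
    [TopologicalSpace V] {ω : V →L[ℝ] V →L[ℝ] ℝ} (hω : ∀ v, (∀ w, ω v w = 0) → v = 0)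
    {v v' : V} (h : ∀ w, ω v w = ω v' w) : v = v' :=
  sub_eq_zero.mp <| hω _ fun w => by simp [h w]

theorem apply_eq_of_momentum_of_dual {E' : Type*} [NormedAddCommGroup E'] [NormedSpace ℝ E']
    {m : M} {ω : TangentSpace I m →L[ℝ] TangentSpace I m →L[ℝ] ℝ} {pair : W →L[ℝ] E' →L[ℝ] ℝ}
    {μ : M → W} (hμ : MDifferentiableAt I 𝓘(ℝ, W) μ m) {B : W →L[ℝ] W →L[ℝ] ℝ} {X : E'}
    (hX : ∀ ξ, B (μ m) ξ = pair ξ X) {Y : TangentSpace I m}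
    (hY : ∀ v, mfderiv I 𝓘(ℝ, ℝ) (fun m' => pair (μ m') X) m v = ω Y v) (v : TangentSpace I m) :
    ω Y v = B (μ m) (mfderiv I 𝓘(ℝ, W) μ m v) := by
  rw [← hY]
  exact ((pair.flip X).hasFDerivAt.mfderiv_comp_apply hμ v).trans (hX _).symm

theorem eq_two_smul_of_apply_eq {m : M} {ω : TangentSpace I m →L[ℝ] TangentSpace I m →L[ℝ] ℝ}
    (hω : ∀ v, (∀ w, ω v w = 0) → v = 0) {μ : M → W} (hμ : MDifferentiableAt I 𝓘(ℝ, W) μ m)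
    {B : W →L[ℝ] W →L[ℝ] ℝ} (hB : ∀ ξ η, B ξ η = B η ξ) {Y Z : TangentSpace I m}
    (hY : ∀ v, ω Y v = B (μ m) (mfderiv I 𝓘(ℝ, W) μ m v))
    (hZ : ∀ v, mfderiv I 𝓘(ℝ, ℝ) (fun m' => B (μ m') (μ m')) m v = ω Z v) :
    Z = (2 : ℝ) • Y :=
  ContinuousLinearMap.eq_of_forall_apply_eq hω fun v => by
    rw [← hZ, mfderiv_apply_self_of_symm hB hμ, map_smul, smul_apply, hY]
    rfl

end

theorem statement5_general
    {E : Type*} [NormedAddCommGroup E] [NormedSpace ℝ E]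
    {H : Type*} [TopologicalSpace H] (I : ModelWithCorners ℝ E H)
    {M : Type*} [TopologicalSpace M] [ChartedSpace H M]
    {E' : Type*} [NormedAddCommGroup E'] [NormedSpace ℝ E']
    {H' : Type*} [TopologicalSpace H'] (I' : ModelWithCorners ℝ E' H')
    {G : Type*} [TopologicalSpace G] [ChartedSpace H' G] [Group G]
    [MulAction G M]
    -- 𝔤* with its (nondegenerate) duality pairing with 𝔤 = E'
    {W : Type*} [NormedAddCommGroup W] [NormedSpace ℝ W]
    (pair : W →L[ℝ] E' →L[ℝ] ℝ)
    -- the symplectic form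
    (ω : ∀ m : M, TangentSpace I m →L[ℝ] TangentSpace I m →L[ℝ] ℝ)
    (hnondeg : ∀ (m : M) (v : TangentSpace I m), (∀ w, ω m v w = 0) → v = 0)
    -- the momentum map: smooth, equivariant, satisfying dμ_X = ω(X^M, −)
    (μ : M → W)
    (hμsmooth : ContMDiff I 𝓘(ℝ, W) (⊤ : ℕ∞) μ)
    (hmom : ∀ (X : E') (m : M) (v : TangentSpace I m),
      mfderiv I 𝓘(ℝ, ℝ) (fun m' => pair (μ m') X) m v
        = ω m (mfderiv I' I (fun g : G => g • m) 1 X) v)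
    -- a smooth G-equivariant family of inner products on 𝔤* = W
    (inn : M → (W →L[ℝ] W →L[ℝ] ℝ))
    (hsymm : ∀ (m : M) (ξ η : W), inn m ξ η = inn m η ξ)
    -- the pointwise dual μ* of μ
    (μstar : M → E')
    (hμstar : ∀ (m : M) (ξ : W), inn m (μ m) ξ = pair ξ (μstar m))
    -- the vector field X₁^ℋ, defined by d₁ℋ = ω(X₁^ℋ, −)
    (X₁ : ∀ m : M, TangentSpace I m)
    (hX₁ : ∀ (m : M) (v : TangentSpace I m),
      mfderiv I 𝓘(ℝ, ℝ) (fun m' => inn m (μ m') (μ m')) m v = ω m (X₁ m) v) :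
    -- Crit₁(ℋ) = {m : μ*(m) ∈ 𝔤_m}, and μ⁻¹(0) ∪ M^G ⊆ Crit₁(ℋ)
    {m : M | X₁ m = 0}
        = {m : M | mfderiv I' I (fun g : G => g • m) 1 (μstar m) = 0}
      ∧ ({m : M | μ m = 0} ∪ {m : M | ∀ g : G, g • m = m}) ⊆ {m : M | X₁ m = 0} := by
  set V : ∀ m : M, TangentSpace I m := fun m => mfderiv I' I (fun g : G => g • m) 1 (μstar m)
  have hμ : ∀ m, MDifferentiableAt I 𝓘(ℝ, W) μ m :=
    fun m => (hμsmooth m).mdifferentiableAt (by simp)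
  have hV : ∀ m v, ω m (V m) v = inn m (μ m) (mfderiv I 𝓘(ℝ, W) μ m v) :=
    fun m => apply_eq_of_momentum_of_dual (hμ m) (hμstar m) (hmom _ m)
  have hcrit : {m | X₁ m = 0} = {m | V m = 0} := by
    ext m
    rw [Set.mem_ofPred_eq, eq_two_smul_of_apply_eq (hnondeg m) (hμ m) (hsymm m) (hV m) (hX₁ m),
      smul_eq_zero_iff_right two_ne_zero, Set.mem_ofPred_eq]
  refine ⟨hcrit, hcrit ▸ ?_⟩
  rintro m (hm | hm)
  · exact ContinuousLinearMap.eq_of_forall_apply_eq (hnondeg m) fun v => by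
      have hinn : inn m (μ m) = 0 := by rw [Set.mem_ofPred_eq.mp hm, map_zero]
      rw [hV, hinn, map_zero]
      rfl
  · show mfderiv I' I (fun g : G => g • m) 1 (μstar m) = 0
    rw [funext hm, mfderiv_const]
    rfl

/-- With a `G`-equivariant family of inner products on `𝔤*` and
`ℋ(m) = ‖μ(m)‖²_m`, the critical set `Crit₁(ℋ)` — the zero set of the vector field `X₁^ℋ`
defined by `d₁ℋ = ω(X₁^ℋ, −)` — equals `{m ∈ M : μ*(m) ∈ 𝔤_m}`, where
`𝔤_m = {X ∈ 𝔤 : X^M_m = 0}` is the stabilizer subalgebra of `m`.  In particular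
`μ⁻¹(0) ∪ M^G ⊆ Crit₁(ℋ)`, where `M^G` is the fixed-point set of the action. -/
theorem statement5
    {E : Type*} [NormedAddCommGroup E] [NormedSpace ℝ E]
    {H : Type*} [TopologicalSpace H] (I : ModelWithCorners ℝ E H)
    {M : Type*} [TopologicalSpace M] [ChartedSpace H M] [IsManifold I (⊤ : ℕ∞) M]
    {E' : Type*} [NormedAddCommGroup E'] [NormedSpace ℝ E']
    {H' : Type*} [TopologicalSpace H'] (I' : ModelWithCorners ℝ E' H')
    {G : Type*} [TopologicalSpace G] [ChartedSpace H' G] [Group G] [LieGroup I' (⊤ : ℕ∞) G]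
    [MulAction G M]
    (hact : ContMDiff (I'.prod I) I (⊤ : ℕ∞) (fun p : G × M => p.1 • p.2))
    -- 𝔤* with its (nondegenerate) duality pairing with 𝔤 = E'
    {W : Type*} [NormedAddCommGroup W] [NormedSpace ℝ W]
    (pair : W →L[ℝ] E' →L[ℝ] ℝ)
    (hpair : Function.Injective pair)
    (hpair' : ∀ X : E', (∀ ξ : W, pair ξ X = 0) → X = 0)
    -- the coadjoint action Ad* of G on 𝔤* = W
    (coAd : G → W →L[ℝ] W)
    (hcoAd_one : coAd 1 = ContinuousLinearMap.id ℝ W)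
    (hcoAd_mul : ∀ g g' : G, coAd (g * g') = (coAd g).comp (coAd g'))
    (hcoAdsmooth : ContMDiff (I'.prod 𝓘(ℝ, W)) 𝓘(ℝ, W) (⊤ : ℕ∞) (fun p : G × W => coAd p.1 p.2))
    -- the symplectic form
    (ω : ∀ m : M, TangentSpace I m →L[ℝ] TangentSpace I m →L[ℝ] ℝ)
    (hanti : ∀ (m : M) (v w : TangentSpace I m), ω m v w = - ω m w v)
    (hnondeg : ∀ (m : M) (v : TangentSpace I m), (∀ w, ω m v w = 0) → v = 0)
    -- the momentum map: smooth, equivariant, satisfying dμ_X = ω(X^M, −)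
    (μ : M → W)
    (hμsmooth : ContMDiff I 𝓘(ℝ, W) (⊤ : ℕ∞) μ)
    (hμequiv : ∀ (g : G) (m : M), μ (g • m) = coAd g (μ m))
    (hmom : ∀ (X : E') (m : M) (v : TangentSpace I m),
      mfderiv I 𝓘(ℝ, ℝ) (fun m' => pair (μ m') X) m v
        = ω m (mfderiv I' I (fun g : G => g • m) 1 X) v)
    -- a smooth G-equivariant family of inner products on 𝔤* = W
    (inn : M → (W →L[ℝ] W →L[ℝ] ℝ))
    (hinnsmooth : ContMDiff I 𝓘(ℝ, W →L[ℝ] W →L[ℝ] ℝ) (⊤ : ℕ∞) inn)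
    (hsymm : ∀ (m : M) (ξ η : W), inn m ξ η = inn m η ξ)
    (hposdef : ∀ (m : M) (ξ : W), ξ ≠ 0 → 0 < inn m ξ ξ)
    (hequivar : ∀ (g : G) (m : M) (ξ η : W),
      inn (g • m) (coAd g ξ) (coAd g η) = inn m ξ η)
    -- the pointwise dual μ* of μ
    (μstar : M → E')
    (hμstar : ∀ (m : M) (ξ : W), inn m (μ m) ξ = pair ξ (μstar m))
    -- the vector field X₁^ℋ, defined by d₁ℋ = ω(X₁^ℋ, −)
    (X₁ : ∀ m : M, TangentSpace I m)
    (hX₁ : ∀ (m : M) (v : TangentSpace I m),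
      mfderiv I 𝓘(ℝ, ℝ) (fun m' => inn m (μ m') (μ m')) m v = ω m (X₁ m) v) :
    -- Crit₁(ℋ) = {m : μ*(m) ∈ 𝔤_m}, and μ⁻¹(0) ∪ M^G ⊆ Crit₁(ℋ)
    {m : M | X₁ m = 0}
        = {m : M | mfderiv I' I (fun g : G => g • m) 1 (μstar m) = 0}
      ∧ ({m : M | μ m = 0} ∪ {m : M | ∀ g : G, g • m = m}) ⊆ {m : M | X₁ m = 0} :=
  statement5_general I I' pair ω hnondeg μ hμsmooth hmom inn hsymm μstar hμstar X₁ hX₁
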